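/- (Proposition 2.4, configuration form) Let x ∈ X_pq be a stationary global minimizer of W_pq and let z ∈ X_pq be stationary. Suppose there exist i, j, m ∈ ℤ such that z_m = (τ_{ij}x)_m but z ≠ τ_{ij}x (the orbit corresponding to z intersects a vertical line through a point of the minimizing orbit). Then z is incomparable with the global minimizer τ_{ij}x: neither τ_{ij}x ≤ z nor z ≤ τ_{ij}x holds. -/

import Mathlib

/-- First partial derivative of the generating function. -/
noncomputable def pd1 (h : ℝ → ℝ → ℝ) (a b : ℝ) : ℝ := deriv (fun s => h s b) a

/-- Second partial derivative of the generating function. -/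
noncomputable def pd2 (h : ℝ → ℝ → ℝ) (a b : ℝ) : ℝ := deriv (fun s => h a s) b

/-- Mixed second partial derivative ∂₁∂₂h. -/
noncomputable def pd12 (h : ℝ → ℝ → ℝ) (a b : ℝ) : ℝ := deriv (fun s => pd2 h s b) a

/-- The space of (p,q)-configurations: x (n+q) = x n + p. -/
def IsConfig (p : ℤ) (q : ℕ) (x : ℤ → ℝ) : Prop := ∀ n : ℤ, x (n + (q : ℤ)) = x n + (p : ℝ)

/-- Stationary configuration: the gradient of the action vanishes. -/
def Stationary (h : ℝ → ℝ → ℝ) (x : ℤ → ℝ) : Prop :=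
  ∀ k : ℤ, pd2 h (x (k - 1)) (x k) + pd1 h (x k) (x (k + 1)) = 0

/-- The periodic action W_pq. -/
noncomputable def W (h : ℝ → ℝ → ℝ) (q : ℕ) (x : ℤ → ℝ) : ℝ :=
  ∑ k ∈ Finset.range q, h (x (k : ℤ)) (x ((k : ℤ) + 1))

/-- The translation τ_{ij} : (τ_{ij}x)_k = x_{k+i} + j. -/
def tau (i j : ℤ) (x : ℤ → ℝ) : ℤ → ℝ := fun k => x (k + i) + (j : ℝ)

/-- Pointwise order on configurations. -/
def ConfLe (x y : ℤ → ℝ) : Prop := ∀ k : ℤ, x k ≤ y k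

section Aux
variable {h : ℝ → ℝ → ℝ}

lemma hasDerivAt_slice1 (hC2 : ContDiff ℝ 2 (Function.uncurry h)) (a b : ℝ) :
    HasDerivAt (fun s => h s b) (fderiv ℝ (Function.uncurry h) (a, b) (1, 0)) a := by
  have hd : HasFDerivAt (Function.uncurry h) (fderiv ℝ (Function.uncurry h) (a, b)) (a, b) :=
    ((hC2.differentiable (by norm_num)) (a, b)).hasFDerivAt
  have hL : HasDerivAt (fun s : ℝ => (s, b)) ((1 : ℝ), (0 : ℝ)) a :=
    (hasDerivAt_id a).prodMk (hasDerivAt_const a b)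
  exact hd.comp_hasDerivAt a hL

lemma hasDerivAt_slice2 (hC2 : ContDiff ℝ 2 (Function.uncurry h)) (a b : ℝ) :
    HasDerivAt (fun t => h a t) (fderiv ℝ (Function.uncurry h) (a, b) (0, 1)) b := by
  have hd : HasFDerivAt (Function.uncurry h) (fderiv ℝ (Function.uncurry h) (a, b)) (a, b) :=
    ((hC2.differentiable (by norm_num)) (a, b)).hasFDerivAt
  have hL : HasDerivAt (fun t : ℝ => (a, t)) ((0 : ℝ), (1 : ℝ)) b :=
    (hasDerivAt_const b a).prodMk (hasDerivAt_id b)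
  exact hd.comp_hasDerivAt b hL

lemma pd1_eq (hC2 : ContDiff ℝ 2 (Function.uncurry h)) (a b : ℝ) :
    pd1 h a b = fderiv ℝ (Function.uncurry h) (a, b) (1, 0) :=
  (hasDerivAt_slice1 hC2 a b).deriv

lemma pd2_eq (hC2 : ContDiff ℝ 2 (Function.uncurry h)) (a b : ℝ) :
    pd2 h a b = fderiv ℝ (Function.uncurry h) (a, b) (0, 1) :=
  (hasDerivAt_slice2 hC2 a b).deriv

lemma diff_fderiv (hC2 : ContDiff ℝ 2 (Function.uncurry h)) :
    Differentiable ℝ (fderiv ℝ (Function.uncurry h)) :=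
  (hC2.fderiv_right (m := 1) (by norm_num)).differentiable one_ne_zero

lemma hasDerivAt_pd2_fst (hC2 : ContDiff ℝ 2 (Function.uncurry h)) (a b : ℝ) :
    HasDerivAt (fun s => pd2 h s b)
      (fderiv ℝ (fderiv ℝ (Function.uncurry h)) (a, b) (1, 0) (0, 1)) a := by
  set F := fderiv ℝ (Function.uncurry h) with hF
  have hL : HasDerivAt (fun s : ℝ => (s, b)) ((1 : ℝ), (0 : ℝ)) a :=
    (hasDerivAt_id a).prodMk (hasDerivAt_const a b)
  have h1 : HasDerivAt (fun s : ℝ => F (s, b)) (fderiv ℝ F (a, b) (1, 0)) a :=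
    ((diff_fderiv hC2 (a, b)).hasFDerivAt).comp_hasDerivAt a hL
  have h2 := ((ContinuousLinearMap.apply ℝ ℝ ((0 : ℝ), (1 : ℝ))).hasFDerivAt).comp_hasDerivAt a h1
  have hfun : (fun s => pd2 h s b)
      = fun s : ℝ => (ContinuousLinearMap.apply ℝ ℝ ((0:ℝ),(1:ℝ))) (F (s, b)) := by
    funext s; exact pd2_eq hC2 s b
  rw [hfun]
  exact h2

lemma hasDerivAt_pd1_snd (hC2 : ContDiff ℝ 2 (Function.uncurry h)) (a b : ℝ) :
    HasDerivAt (fun t => pd1 h a t)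
      (fderiv ℝ (fderiv ℝ (Function.uncurry h)) (a, b) (0, 1) (1, 0)) b := by
  set F := fderiv ℝ (Function.uncurry h) with hF
  have hL : HasDerivAt (fun t : ℝ => (a, t)) ((0 : ℝ), (1 : ℝ)) b :=
    (hasDerivAt_const b a).prodMk (hasDerivAt_id b)
  have h1 : HasDerivAt (fun t : ℝ => F (a, t)) (fderiv ℝ F (a, b) (0, 1)) b :=
    ((diff_fderiv hC2 (a, b)).hasFDerivAt).comp_hasDerivAt b hL
  have h2 := ((ContinuousLinearMap.apply ℝ ℝ ((1 : ℝ), (0 : ℝ))).hasFDerivAt).comp_hasDerivAt b h1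
  have hfun : (fun t => pd1 h a t)
      = fun t : ℝ => (ContinuousLinearMap.apply ℝ ℝ ((1:ℝ),(0:ℝ))) (F (a, t)) := by
    funext t; exact pd1_eq hC2 a t
  rw [hfun]
  exact h2

lemma deriv_pd1_snd (hC2 : ContDiff ℝ 2 (Function.uncurry h)) (a b : ℝ) :
    deriv (fun t => pd1 h a t) b = pd12 h a b := by
  have hsymm : fderiv ℝ (fderiv ℝ (Function.uncurry h)) (a, b) (0, 1) (1, 0) =
      fderiv ℝ (fderiv ℝ (Function.uncurry h)) (a, b) (1, 0) (0, 1) :=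
    second_derivative_symmetric
      (fun y => ((hC2.differentiable (by norm_num)) y).hasFDerivAt)
      ((diff_fderiv hC2 (a, b)).hasFDerivAt) _ _
  rw [(hasDerivAt_pd1_snd hC2 a b).deriv, hsymm]
  exact ((hasDerivAt_pd2_fst hC2 a b).deriv).symm

lemma pd2_strictAnti (htwist : ∀ a b : ℝ, pd12 h a b < 0) (b : ℝ) :
    StrictAnti (fun s => pd2 h s b) :=
  strictAnti_of_deriv_neg (fun a => htwist a b)

lemma pd1_strictAnti (hC2 : ContDiff ℝ 2 (Function.uncurry h))
    (htwist : ∀ a b : ℝ, pd12 h a b < 0) (a : ℝ) :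
    StrictAnti (fun t => pd1 h a t) :=
  strictAnti_of_deriv_neg (fun b => by rw [deriv_pd1_snd hC2]; exact htwist a b)

/-- Strong comparison: two stationary configurations that are ordered and touch
at one index are equal. -/
lemma touch_eq (hC2 : ContDiff ℝ 2 (Function.uncurry h))
    (htwist : ∀ a b : ℝ, pd12 h a b < 0)
    {u v : ℤ → ℝ} (hu : Stationary h u) (hv : Stationary h v)
    (hle : ConfLe u v) {m : ℤ} (hm : u m = v m) : u = v := by
  have step_up : ∀ k : ℤ, u k = v k → u (k + 1) = v (k + 1) := by
    intro k hk
    by_contra hne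
    have hlt : u (k + 1) < v (k + 1) := lt_of_le_of_ne (hle _) hne
    have h1 : pd1 h (u k) (v (k + 1)) < pd1 h (u k) (u (k + 1)) :=
      pd1_strictAnti hC2 htwist (u k) hlt
    have h2 : pd2 h (v (k - 1)) (u k) ≤ pd2 h (u (k - 1)) (u k) :=
      (pd2_strictAnti htwist (u k)).antitone (hle (k - 1))
    have e1 := hu k
    have e2 := hv k
    rw [← hk] at e2
    linarith
  have step_down : ∀ k : ℤ, u k = v k → u (k - 1) = v (k - 1) := by
    intro k hk
    by_contra hne
    have hlt : u (k - 1) < v (k - 1) := lt_of_le_of_ne (hle _) hne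
    have h1 : pd2 h (v (k - 1)) (u k) < pd2 h (u (k - 1)) (u k) :=
      pd2_strictAnti htwist (u k) hlt
    have h2 : pd1 h (u k) (v (k + 1)) ≤ pd1 h (u k) (u (k + 1)) :=
      (pd1_strictAnti hC2 htwist (u k)).antitone (hle (k + 1))
    have e1 := hu k
    have e2 := hv k
    rw [← hk] at e2
    linarith
  have key : ∀ d : ℤ, u (m + d) = v (m + d) := by
    intro d
    induction d using Int.induction_on with
    | zero => simpa using hm
    | succ n ih =>
        rw [show m + ((n : ℤ) + 1) = (m + n) + 1 from by ring]
        exact step_up _ ih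
    | pred n ih =>
        rw [show m + (-(n : ℤ) - 1) = (m + -(n : ℤ)) - 1 from by ring]
        exact step_down _ ih
  funext k
  have := key (k - m)
  rwa [show m + (k - m) = k from by ring] at this

lemma h_shift (hper : ∀ a b : ℝ, h (a + 1) (b + 1) = h a b) :
    ∀ (j : ℤ) (a b : ℝ), h (a + j) (b + j) = h a b := by
  intro j
  induction j using Int.induction_on with
  | zero => simp
  | succ n ih =>
      intro a b
      have e1 : a + (((n : ℤ) + 1 : ℤ) : ℝ) = (a + ((n : ℤ) : ℝ)) + 1 := by push_cast; ring
      have e2 : b + (((n : ℤ) + 1 : ℤ) : ℝ) = (b + ((n : ℤ) : ℝ)) + 1 := by push_cast; ring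
      rw [e1, e2, hper, ih a b]
  | pred n ih =>
      intro a b
      have e1 : a + ((-(n : ℤ) - 1 : ℤ) : ℝ) + 1 = a + ((-(n : ℤ) : ℤ) : ℝ) := by
        push_cast; ring
      have e2 : b + ((-(n : ℤ) - 1 : ℤ) : ℝ) + 1 = b + ((-(n : ℤ) : ℤ) : ℝ) := by
        push_cast; ring
      have := hper (a + ((-(n : ℤ) - 1 : ℤ) : ℝ)) (b + ((-(n : ℤ) - 1 : ℤ) : ℝ))
      rw [e1, e2, ih a b] at this
      exact this.symm

lemma pd1_shift (hper : ∀ a b : ℝ, h (a + 1) (b + 1) = h a b) (j : ℤ) (a b : ℝ) :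
    pd1 h (a + j) (b + j) = pd1 h a b := by
  unfold pd1
  rw [← deriv_comp_add_const (fun s => h s (b + j)) (j : ℝ) a]
  congr 1
  funext s
  exact h_shift hper j s b

lemma pd2_shift (hper : ∀ a b : ℝ, h (a + 1) (b + 1) = h a b) (j : ℤ) (a b : ℝ) :
    pd2 h (a + j) (b + j) = pd2 h a b := by
  unfold pd2
  rw [← deriv_comp_add_const (fun t => h (a + j) t) (j : ℝ) b]
  congr 1
  funext t
  exact h_shift hper j a t

lemma tau_stationary (hper : ∀ a b : ℝ, h (a + 1) (b + 1) = h a b)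
    {x : ℤ → ℝ} (hxs : Stationary h x) (i j : ℤ) : Stationary h (tau i j x) := by
  intro k
  have e := hxs (k + i)
  simp only [tau]
  rw [show k - 1 + i = k + i - 1 from by ring, show k + 1 + i = k + i + 1 from by ring,
    pd2_shift hper j _ _, pd1_shift hper j _ _]
  exact e

end Aux

/-- Proposition 2.4 (configuration form): a stationary configuration agreeing at
some index with a translate of a minimizer, while differing from it, is
incomparable with that translate. -/
theorem stationary_meeting_minimizer_incomparable
    (p : ℤ) (q : ℕ) (hq : 0 < q) (hpq : IsCoprime p (q : ℤ))
    (h : ℝ → ℝ → ℝ) (hC2 : ContDiff ℝ 2 (Function.uncurry h))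
    (htwist : ∀ a b : ℝ, pd12 h a b < 0)
    (hper : ∀ a b : ℝ, h (a + 1) (b + 1) = h a b)
    (x : ℤ → ℝ) (hx : IsConfig p q x) (hxs : Stationary h x)
    (hxmin : ∀ y : ℤ → ℝ, IsConfig p q y → W h q x ≤ W h q y)
    (z : ℤ → ℝ) (hz : IsConfig p q z) (hzs : Stationary h z)
    (i j m : ℤ) (hmeet : z m = tau i j x m) (hne : z ≠ tau i j x) :
    ¬ ConfLe (tau i j x) z ∧ ¬ ConfLe z (tau i j x) := by
  have hys : Stationary h (tau i j x) := tau_stationary hper hxs i j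
  constructor
  · intro hle
    exact hne (touch_eq hC2 htwist hys hzs hle hmeet.symm).symm
  · intro hle
    exact hne (touch_eq hC2 htwist hzs hys hle hmeet)
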